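/- Suppose B and C are √gl_n-crystals. Then the set B ⊗ C = {b ⊗ c : b ∈ B, c ∈ C} of formal tensors is a √gl_n-crystal with weight map wt(b ⊗ c) = wt(b) + wt(c) and operators, for i ∈ [n−1]: e'_i(b ⊗ c) = b ⊗ e'_i(c) if ε'_i(b) ≤ φ'_i(c) and e'_i(b) ⊗ c if ε'_i(b) > φ'_i(c); f'_i(b ⊗ c) = b ⊗ f'_i(c) if ε'_i(b) < φ'_i(c) and f'_i(b) ⊗ c if ε'_i(b) ≥ φ'_i(c), with the convention b ⊗ 0 = 0 ⊗ c = 0. -/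

import Mathlib

open scoped Classical

/-! ## Shifted diagrams, hook words, decomposition tableaux -/

/-- A strict partition, given as its (strictly decreasing) list of positive parts. -/
def IsStrictPartition (lam : List ℕ) : Prop :=
  lam.Chain' (· > ·) ∧ ∀ p ∈ lam, 0 < p

/-- A partition (weakly decreasing list of positive parts). -/
def IsPartition (lam : List ℕ) : Prop :=
  lam.Chain' (· ≥ ·) ∧ ∀ p ∈ lam, 0 < p

/-- `(i, j)` (1-indexed row `i`, column `j`) is a box of the shifted diagram `SD_lam`. -/
def InSD (lam : List ℕ) (i j : ℕ) : Prop :=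
  1 ≤ i ∧ i ≤ lam.length ∧ i ≤ j ∧ j < i + lam.getD (i - 1) 0

/-- `(i, j)` is a box of the (unshifted) Young diagram of `lam`. -/
def InYD (lam : List ℕ) (i j : ℕ) : Prop :=
  1 ≤ i ∧ i ≤ lam.length ∧ 1 ≤ j ∧ j ≤ lam.getD (i - 1) 0

/-- The word given by row `i` (1-indexed) of a shifted tableau `T`, read left to right. -/
def rowWord (lam : List ℕ) (T : ℕ × ℕ → ℕ) (i : ℕ) : List ℕ :=
  (List.range (lam.getD (i - 1) 0)).map fun j => T (i, i + j)

/-- A hook word: a sequence of positive integers `w₁ ≥ ⋯ ≥ w_m < w_{m+1} < ⋯ < w_n`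
for some `m ∈ [n]`. -/
def IsHookWord (w : List ℕ) : Prop :=
  (∀ v ∈ w, 0 < v) ∧
  ∃ m, 1 ≤ m ∧ m ≤ w.length ∧
    (∀ j : ℕ, j + 1 < m → w.getD (j + 1) 0 ≤ w.getD j 0) ∧
    (∀ j : ℕ, m ≤ j + 1 → j + 1 < w.length → w.getD j 0 < w.getD (j + 1) 0)

/-- `r` is a hook subword of maximal length in `s`. -/
def IsMaxHookSubwordIn (r s : List ℕ) : Prop :=
  r.Sublist s ∧ IsHookWord r ∧
    ∀ t : List ℕ, t.Sublist s → IsHookWord t → t.length ≤ r.length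

/-- A (semistandard) decomposition tableau of shifted shape `lam`. -/
def IsDecompTab (lam : List ℕ) (T : ℕ × ℕ → ℕ) : Prop :=
  (∀ i, 1 ≤ i → i ≤ lam.length → IsHookWord (rowWord lam T i)) ∧
  (∀ i, 1 ≤ i → i + 1 ≤ lam.length →
    IsMaxHookSubwordIn (rowWord lam T i) (rowWord lam T (i + 1) ++ rowWord lam T i))

/-! ## Set-valued decomposition tableaux -/

/-- A set-valued decomposition tableau: boxes of `SD_lam` are filled by finite nonempty
sets of positive integers, all of whose distributions are decomposition tableaux. -/
def IsSetDecompTab (lam : List ℕ) (T : ℕ × ℕ → Finset ℕ) : Prop :=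
  (∀ i j, InSD lam i j → (T (i, j)).Nonempty ∧ 0 ∉ T (i, j)) ∧
  (∀ d : ℕ × ℕ → ℕ, (∀ i j, InSD lam i j → d (i, j) ∈ T (i, j)) → IsDecompTab lam d)

/-- Set-valued decomposition tableau whose every entry is contained in `{1, …, n}`. -/
def IsSetDecompTabN (n : ℕ) (lam : List ℕ) (T : ℕ × ℕ → Finset ℕ) : Prop :=
  IsSetDecompTab lam T ∧ ∀ i j, InSD lam i j → ∀ v ∈ T (i, j), v ≤ n

/-! ## Reverse row reading words -/

/-- The boxes of `SD_lam` in reverse row reading order: the first row read right to left,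
then the second row right to left, and so on. -/
def revrowBoxes (lam : List ℕ) : List (ℕ × ℕ) :=
  (List.range lam.length).flatMap fun r =>
    (List.range (lam.getD r 0)).reverse.map fun j => (r + 1, r + 1 + j)

/-- Position of a box in the reverse row reading order. -/
def boxIdx (lam : List ℕ) (b : ℕ × ℕ) : ℕ := (revrowBoxes lam).idxOf b

/-- The reverse row reading word of a set-valued tableau, with each letter labelled by
its box: entries within each box are listed in decreasing order. -/
def revrowEntries (lam : List ℕ) (T : ℕ × ℕ → Finset ℕ) : List ((ℕ × ℕ) × ℕ) :=
  (revrowBoxes lam).flatMap fun b => (((T b).sort (· ≤ ·)).reverse).map fun v => (b, v)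

/-- The reverse row reading word of a set-valued tableau. -/
def revrowWord (lam : List ℕ) (T : ℕ × ℕ → Finset ℕ) : List ℕ :=
  (revrowEntries lam T).map Prod.snd

/-- `wtSet lam T k` is the number of boxes of `T` whose entry contains `k`. -/
noncomputable def wtSet (lam : List ℕ) (T : ℕ × ℕ → Finset ℕ) (k : ℕ) : ℕ :=
  ((revrowBoxes lam).filter fun b => decide (k ∈ T b)).length

/-- `wtNum lam T k` is the number of boxes of an ordinary tableau `T` equal to `k`. -/
noncomputable def wtNum (lam : List ℕ) (T : ℕ × ℕ → ℕ) (k : ℕ) : ℕ :=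
  ((revrowBoxes lam).filter fun b => decide (T b = k)).length

/-! ## Parenthesis pairing: `i`-unpaired letters -/

/-- Number of unmatched `i+1`'s ( "(" ) after scanning `u` left to right,
where each `i` ( ")" ) cancels the most recent unmatched `i+1`. -/
def openCount (i : ℕ) (u : List ℕ) : ℕ :=
  u.foldl (fun acc a => if a = i + 1 then acc + 1 else if a = i then acc - 1 else acc) 0

/-- Number of unmatched `i`'s ( ")" ) after scanning `u` right to left,
where each `i+1` ( "(" ) cancels the nearest unmatched `i` to its right. -/
def closeCount (i : ℕ) (u : List ℕ) : ℕ :=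
  u.foldr (fun a acc => if a = i then acc + 1 else if a = i + 1 then acc - 1 else acc) 0

/-- Position `p` of `w` holds an `i`-unpaired letter equal to `i+1`. -/
def UnpairedHigh (i : ℕ) (w : List ℕ) (p : ℕ) : Prop :=
  p < w.length ∧ w.getD p 0 = i + 1 ∧ closeCount i (w.drop (p + 1)) = 0

/-- Position `p` of `w` holds an `i`-unpaired letter equal to `i`. -/
def UnpairedLow (i : ℕ) (w : List ℕ) (p : ℕ) : Prop :=
  p < w.length ∧ w.getD p 0 = i ∧ openCount i (w.take p) = 0

instance (i : ℕ) (w : List ℕ) (p : ℕ) : Decidable (UnpairedHigh i w p) := by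
  unfold UnpairedHigh; infer_instance

instance (i : ℕ) (w : List ℕ) (p : ℕ) : Decidable (UnpairedLow i w p) := by
  unfold UnpairedLow; infer_instance

/-- The number of `i`-unpaired letters equal to `i+1` in `w`. -/
def numUnpairedHigh (i : ℕ) (w : List ℕ) : ℕ :=
  ((List.range w.length).filter fun p => decide (UnpairedHigh i w p)).length

/-- The number of `i`-unpaired letters equal to `i` in `w`. -/
def numUnpairedLow (i : ℕ) (w : List ℕ) : ℕ :=
  ((List.range w.length).filter fun p => decide (UnpairedLow i w p)).length

/-! ## Iterated partial operators and string lengths -/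

/-- Iterate a partial operator, with the convention that `0` (i.e. `none`) is absorbing. -/
def iterOpt {α : Type*} (g : α → Option α) : ℕ → α → Option α
  | 0, a => some a
  | k + 1, a => (g a).bind (iterOpt g k)

/-- `m` is the exact string length `sup {k | g^k a ≠ 0}` of `a` under `g`. -/
def HasStringLen {α : Type*} (g : α → Option α) (a : α) (m : ℕ) : Prop :=
  iterOpt g m a ≠ none ∧ iterOpt g (m + 1) a = none

/-! ## The queer crystal operators on set-valued decomposition tableaux -/

/-- The raising crystal operator `e_i` on set-valued decomposition tableaux. -/
noncomputable def eCrystal (lam : List ℕ) (i : ℕ) (T : ℕ × ℕ → Finset ℕ) :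
    Option (ℕ × ℕ → Finset ℕ) :=
  if h : ∃ p, UnpairedHigh i (revrowWord lam T) p then
    let xy := ((revrowEntries lam T).getD (Nat.find h) ((0, 0), 0)).1
    let T1 := Function.update T xy (insert i ((T xy).erase (i + 1)))
    if IsSetDecompTab lam T1 then some T1
    else if _hab : ∃ m, m < boxIdx lam xy ∧ i ∈ T ((revrowBoxes lam).getD m (0, 0)) ∧
        i + 1 ∈ T ((revrowBoxes lam).getD m (0, 0)) then
      let m := Nat.findGreatest (fun m => m < boxIdx lam xy ∧
          i ∈ T ((revrowBoxes lam).getD m (0, 0)) ∧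
          i + 1 ∈ T ((revrowBoxes lam).getD m (0, 0))) (boxIdx lam xy)
      let ab := (revrowBoxes lam).getD m (0, 0)
      some (Function.update (Function.update T ab ((T ab).erase (i + 1))) xy
        (insert i (T xy)))
    else none
  else none

/-- The lowering crystal operator `f_i` on set-valued decomposition tableaux. -/
noncomputable def fCrystal (lam : List ℕ) (i : ℕ) (T : ℕ × ℕ → Finset ℕ) :
    Option (ℕ × ℕ → Finset ℕ) :=
  if _h : ∃ p, UnpairedLow i (revrowWord lam T) p then
    let p := Nat.findGreatest (fun p => UnpairedLow i (revrowWord lam T) p)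
      (revrowWord lam T).length
    let xy := ((revrowEntries lam T).getD p ((0, 0), 0)).1
    let T1 := Function.update T xy (insert (i + 1) ((T xy).erase i))
    if IsSetDecompTab lam T1 then some T1
    else if hab : ∃ m, boxIdx lam xy < m ∧ m < (revrowBoxes lam).length ∧
        i ∈ T ((revrowBoxes lam).getD m (0, 0)) ∧
        i + 1 ∈ T ((revrowBoxes lam).getD m (0, 0)) then
      let ab := (revrowBoxes lam).getD (Nat.find hab) (0, 0)
      some (Function.update (Function.update T ab ((T ab).erase i)) xy
        (insert (i + 1) (T xy)))
    else none
  else none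

/-- The queer raising operator `e_1̄` on set-valued decomposition tableaux. -/
noncomputable def eBarCrystal (lam : List ℕ) (T : ℕ × ℕ → Finset ℕ) :
    Option (ℕ × ℕ → Finset ℕ) :=
  if h : ∃ p, p < (revrowWord lam T).length ∧ (revrowWord lam T).getD p 0 = 2 ∧
      ∀ q < p, (revrowWord lam T).getD q 0 ≠ 1 then
    let xy := ((revrowEntries lam T).getD (Nat.find h) ((0, 0), 0)).1
    if 1 ∈ T xy then none
    else some (Function.update T xy (insert 1 ((T xy).erase 2)))
  else none

/-- The queer lowering operator `f_1̄` on set-valued decomposition tableaux. -/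
noncomputable def fBarCrystal (lam : List ℕ) (T : ℕ × ℕ → Finset ℕ) :
    Option (ℕ × ℕ → Finset ℕ) :=
  if h : ∃ p, p < (revrowWord lam T).length ∧ (revrowWord lam T).getD p 0 = 1 ∧
      ∀ q < p, (revrowWord lam T).getD q 0 ≠ 2 then
    let xy := ((revrowEntries lam T).getD (Nat.find h) ((0, 0), 0)).1
    some (Function.update T xy (insert 2 ((T xy).erase 1)))
  else none
/-! ## Multiset-valued decomposition tableaux -/

/-- A multiset-valued decomposition tableau in which only the entry `1` may repeat
within a box, all of whose distributions are decomposition tableaux. -/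
def IsMultisetDecompTab (lam : List ℕ) (T : ℕ × ℕ → Multiset ℕ) : Prop :=
  (∀ i j, InSD lam i j → T (i, j) ≠ 0 ∧ 0 ∉ T (i, j) ∧
      ∀ v : ℕ, v ≠ 1 → (T (i, j)).count v ≤ 1) ∧
  (∀ d : ℕ × ℕ → ℕ, (∀ i j, InSD lam i j → d (i, j) ∈ T (i, j)) → IsDecompTab lam d)

/-- Reverse row reading word of a multiset-valued tableau, with boxes recorded. -/
def revrowEntriesM (lam : List ℕ) (T : ℕ × ℕ → Multiset ℕ) : List ((ℕ × ℕ) × ℕ) :=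
  (revrowBoxes lam).flatMap fun b => (((T b).sort (· ≤ ·)).reverse).map fun v => (b, v)

/-- Reverse row reading word of a multiset-valued tableau. -/
def revrowWordM (lam : List ℕ) (T : ℕ × ℕ → Multiset ℕ) : List ℕ :=
  (revrowEntriesM lam T).map Prod.snd

/-- The operator `e*_1̄` on multiset-valued decomposition tableaux: if the first `2` of
the reverse row reading word occurs before every `1`, change it to a `1`. -/
noncomputable def eStarBar (lam : List ℕ) (T : ℕ × ℕ → Multiset ℕ) :
    Option (ℕ × ℕ → Multiset ℕ) :=
  if h : ∃ p, p < (revrowWordM lam T).length ∧ (revrowWordM lam T).getD p 0 = 2 ∧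
      ∀ q < p, (revrowWordM lam T).getD q 0 ≠ 1 then
    let b := ((revrowEntriesM lam T).getD (Nat.find h) ((0, 0), 0)).1
    some (Function.update T b (1 ::ₘ (T b).erase 2))
  else none

/-- The operator `f*_1̄` on multiset-valued decomposition tableaux: if the first `1` of
the reverse row reading word occurs before every `2`, change it to a `2`. -/
noncomputable def fStarBar (lam : List ℕ) (T : ℕ × ℕ → Multiset ℕ) :
    Option (ℕ × ℕ → Multiset ℕ) :=
  if h : ∃ p, p < (revrowWordM lam T).length ∧ (revrowWordM lam T).getD p 0 = 1 ∧
      ∀ q < p, (revrowWordM lam T).getD q 0 ≠ 2 then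
    let b := ((revrowEntriesM lam T).getD (Nat.find h) ((0, 0), 0)).1
    some (Function.update T b (2 ::ₘ (T b).erase 1))
  else none

/-! ## Linked `i`-words and square-root crystal operators -/

/-- Characters of a linked `i`-word: `(`, `)` and `-`. -/
inductive PChar : Type
  | op : PChar
  | cl : PChar
  | dash : PChar
  deriving DecidableEq

/-- The linked `i`-word of a set-valued tableau, with each character labelled by its box:
a box containing `i` but not `i+1` gives `)`, a box containing `i+1` but not `i` gives `(`,
and a box containing both gives `)-(`; boxes are read in reverse row reading order. -/
def tokens (lam : List ℕ) (i : ℕ) (T : ℕ × ℕ → Finset ℕ) : List (PChar × (ℕ × ℕ)) :=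
  (revrowBoxes lam).flatMap fun b =>
    if i ∈ T b ∧ i + 1 ∈ T b then [(PChar.cl, b), (PChar.dash, b), (PChar.op, b)]
    else if i ∈ T b then [(PChar.cl, b)]
    else if i + 1 ∈ T b then [(PChar.op, b)]
    else []

/-- Unmatched `(`s after scanning left to right (ignoring dashes). -/
def openCnt (u : List PChar) : ℕ :=
  u.foldl (fun acc a => match a with
    | PChar.op => acc + 1
    | PChar.cl => acc - 1
    | PChar.dash => acc) 0

/-- Unmatched `)`s after scanning right to left (ignoring dashes). -/
def closeCnt (u : List PChar) : ℕ :=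
  u.foldr (fun a acc => match a with
    | PChar.cl => acc + 1
    | PChar.op => acc - 1
    | PChar.dash => acc) 0

/-- Position `p` holds an unpaired `(`. -/
def UnpairedOp (ws : List PChar) (p : ℕ) : Prop :=
  p < ws.length ∧ ws.getD p PChar.dash = PChar.op ∧ closeCnt (ws.drop (p + 1)) = 0

/-- Position `p` holds an unpaired `)`. -/
def UnpairedCl (ws : List PChar) (p : ℕ) : Prop :=
  p < ws.length ∧ ws.getD p PChar.dash = PChar.cl ∧ openCnt (ws.take p) = 0

/-- A fully matched (balanced) parenthesis word, ignoring dashes. -/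
def BalancedP (u : List PChar) : Prop :=
  u.count PChar.op = u.count PChar.cl ∧
  ∀ k, (u.take k).count PChar.cl ≤ (u.take k).count PChar.op

/-- The `(` at position `a` is matched with the `)` at position `b`. -/
def MatchedPair (ws : List PChar) (a b : ℕ) : Prop :=
  a < b ∧ b < ws.length ∧ ws.getD a PChar.dash = PChar.op ∧
  ws.getD b PChar.dash = PChar.cl ∧ BalancedP ((ws.drop (a + 1)).take (b - (a + 1)))

/-- Generating relation for equivalence classes of characters: a matched pair together
with everything between them lies in one class, and so do the three characters `)-(`
coming from a single box. -/
def LinkRel (ws : List PChar) (p q : ℕ) : Prop :=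
  (∃ a b, MatchedPair ws a b ∧ a ≤ p ∧ p ≤ b ∧ a ≤ q ∧ q ≤ b) ∨
  (∃ d, 1 ≤ d ∧ d + 1 < ws.length ∧ ws.getD d PChar.op = PChar.dash ∧
    (p = d - 1 ∨ p = d ∨ p = d + 1) ∧ (q = d - 1 ∨ q = d ∨ q = d + 1))

/-- Two positions lie in the same equivalence class of the linked `i`-word. -/
def SameClass (ws : List PChar) : ℕ → ℕ → Prop := Relation.ReflTransGen (LinkRel ws)

/-- The class of position `p` contains an unpaired `(`. -/
def HasUnpairedOpIn (ws : List PChar) (p : ℕ) : Prop :=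
  ∃ q, SameClass ws p q ∧ UnpairedOp ws q

/-- The class of position `p` contains an unpaired `)`. -/
def HasUnpairedClIn (ws : List PChar) (p : ℕ) : Prop :=
  ∃ q, SameClass ws p q ∧ UnpairedCl ws q

/-- Position `p` belongs to a left form: a class with no unpaired `)` that ends
with an unpaired `(`. -/
def IsLeftFormAt (ws : List PChar) (p : ℕ) : Prop :=
  p < ws.length ∧ HasUnpairedOpIn ws p ∧ ¬ HasUnpairedClIn ws p

/-- Position `p` belongs to a right form: a class with no unpaired `(` that starts
with an unpaired `)`. -/
def IsRightFormAt (ws : List PChar) (p : ℕ) : Prop :=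
  p < ws.length ∧ HasUnpairedClIn ws p ∧ ¬ HasUnpairedOpIn ws p

/-- The square-root raising operator `e'_i` on set-valued decomposition tableaux. -/
noncomputable def eSqrt (lam : List ℕ) (i : ℕ) (T : ℕ × ℕ → Finset ℕ) :
    Option (ℕ × ℕ → Finset ℕ) :=
  let tk := tokens lam i T
  let ws := tk.map Prod.fst
  if hc : ∃ p, UnpairedOp ws p ∧ HasUnpairedClIn ws p then
    -- the `)-(` at the end of the combined form: remove `i+1` from its box
    let b := (tk.getD (Nat.find hc) (PChar.op, (0, 0))).2
    some (Function.update T b ((T b).erase (i + 1)))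
  else if hl : ∃ p, IsLeftFormAt ws p then
    -- the `(` at the start of the first left form: add `i` to its box
    let b := (tk.getD (Nat.find hl) (PChar.op, (0, 0))).2
    some (Function.update T b (insert i (T b)))
  else none

/-- The square-root lowering operator `f'_i` on set-valued decomposition tableaux. -/
noncomputable def fSqrt (lam : List ℕ) (i : ℕ) (T : ℕ × ℕ → Finset ℕ) :
    Option (ℕ × ℕ → Finset ℕ) :=
  let tk := tokens lam i T
  let ws := tk.map Prod.fst
  if hc : ∃ p, UnpairedCl ws p ∧ HasUnpairedOpIn ws p then
    -- the `)-(` at the beginning of the combined form: remove `i` from its box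
    let b := (tk.getD (Nat.find hc) (PChar.op, (0, 0))).2
    some (Function.update T b ((T b).erase i))
  else if _hr : ∃ p, IsRightFormAt ws p then
    -- the `)` at the end of the last right form: add `i+1` to its box
    let b := (tk.getD (Nat.findGreatest (fun p => IsRightFormAt ws p) ws.length)
        (PChar.op, (0, 0))).2
    some (Function.update T b (insert (i + 1) (T b)))
  else none

/-- The square-root queer raising operator `e'_1̄`. -/
noncomputable def eBarSqrt (lam : List ℕ) (T : ℕ × ℕ → Finset ℕ) :
    Option (ℕ × ℕ → Finset ℕ) :=
  if h : ∃ m, m < (revrowBoxes lam).length ∧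
      (1 ∈ T ((revrowBoxes lam).getD m (0, 0)) ∨ 2 ∈ T ((revrowBoxes lam).getD m (0, 0))) then
    let b := (revrowBoxes lam).getD (Nat.find h) (0, 0)
    if 1 ∈ T b then
      if 2 ∈ T b then some (Function.update T b ((T b).erase 2)) else none
    else some (Function.update T b (insert 1 (T b)))
  else none

/-- The square-root queer lowering operator `f'_1̄`. -/
noncomputable def fBarSqrt (lam : List ℕ) (T : ℕ × ℕ → Finset ℕ) :
    Option (ℕ × ℕ → Finset ℕ) :=
  if h : ∃ m, m < (revrowBoxes lam).length ∧
      (1 ∈ T ((revrowBoxes lam).getD m (0, 0)) ∨ 2 ∈ T ((revrowBoxes lam).getD m (0, 0))) then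
    let b := (revrowBoxes lam).getD (Nat.find h) (0, 0)
    if 2 ∈ T b then
      if 1 ∈ T b then some (Function.update T b ((T b).erase 1)) else none
    else some (Function.update T b (insert 2 (T b)))
  else none
/-! ## Abstract √gl_n- and √q_n-crystals -/

/-- The data of a crystal-like structure: a weight map (coordinates `1, …, n` are the
relevant ones) and partial raising/lowering operators indexed by `i ∈ [n-1]`. -/
structure SqGlData (B : Type*) where
  wt : B → ℕ → ℕ
  e : ℕ → B → Option B
  f : ℕ → B → Option B

/-- The axioms of a `√gl_n`-crystal. -/
def IsSqGlCrystal {B : Type*} (n : ℕ) (D : SqGlData B) : Prop :=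
  (∀ i, 1 ≤ i → i < n → ∀ b, ∃ ep ph : ℕ,
      HasStringLen (D.e i) b ep ∧ HasStringLen (D.f i) b ph ∧
      Even (ep + ph) ∧ (ph : ℤ) - ep = 2 * ((D.wt b i : ℤ) - D.wt b (i + 1))) ∧
  (∀ i, 1 ≤ i → i < n → ∀ b c, D.e i b = some c ↔ D.f i c = some b) ∧
  (∀ i, 1 ≤ i → i < n → ∀ b c, D.e i b = some c → ∀ ep, HasStringLen (D.e i) b ep →
      ∀ k, (D.wt c k : ℤ) - D.wt b k =
        if Even ep then (if k = i then 1 else 0) else (if k = i + 1 then -1 else 0))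

/-- The data of a queer crystal-like structure. -/
structure SqQData (B : Type*) extends SqGlData B where
  ebar : B → Option B
  fbar : B → Option B

/-- The axioms of a `√q_n`-crystal. -/
def IsSqQnCrystal {B : Type*} (n : ℕ) (D : SqQData B) : Prop :=
  IsSqGlCrystal n D.toSqGlData ∧
  (∀ i, 3 ≤ i → i < n → ∀ b,
      (D.e i b).bind D.ebar = (D.ebar b).bind (D.e i) ∧
      (D.f i b).bind D.ebar = (D.ebar b).bind (D.f i) ∧
      (D.e i b).bind D.fbar = (D.fbar b).bind (D.e i) ∧
      (D.f i b).bind D.fbar = (D.fbar b).bind (D.f i)) ∧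
  (∀ i, 3 ≤ i → i < n → ∀ b c, (D.ebar b = some c ∨ D.fbar b = some c) →
      (∀ m, HasStringLen (D.e i) b m ↔ HasStringLen (D.e i) c m) ∧
      (∀ m, HasStringLen (D.f i) b m ↔ HasStringLen (D.f i) c m)) ∧
  (∀ b, ∃ ep ph : ℕ, HasStringLen D.ebar b ep ∧ HasStringLen D.fbar b ph ∧
      ep + ph = (if D.wt b 1 = 0 ∧ D.wt b 2 = 0 then 0 else 2)) ∧
  (∀ b c, D.ebar b = some c ↔ D.fbar c = some b) ∧
  (∀ b c, D.ebar b = some c → ∀ ep, HasStringLen D.ebar b ep →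
      ∀ k, (D.wt c k : ℤ) - D.wt b k =
        if ep = 2 then (if k = 1 then 1 else 0) else (if k = 2 then -1 else 0))

/-- The square of a partial operator. -/
def sqOp {B : Type*} (g : B → Option B) : B → Option B := fun b => (g b).bind g

/-- The axioms of a (seminormal) `gl_n`-crystal for given weight map and operators. -/
def GlSeminormalAxioms {B : Type*} (n : ℕ) (wt : B → ℕ → ℕ)
    (E F : ℕ → B → Option B) : Prop :=
  (∀ i, 1 ≤ i → i < n → ∀ b c, E i b = some c ↔ F i c = some b) ∧
  (∀ i, 1 ≤ i → i < n → ∀ b c, E i b = some c →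
      ∀ k, (wt c k : ℤ) - wt b k = (if k = i then 1 else 0) - (if k = i + 1 then 1 else 0)) ∧
  (∀ i, 1 ≤ i → i < n → ∀ b, ∃ ep ph : ℕ,
      HasStringLen (E i) b ep ∧ HasStringLen (F i) b ph ∧
      (ph : ℤ) - ep = (wt b i : ℤ) - wt b (i + 1))

/-- The additional axioms making a `gl_n`-crystal into a `q_n`-crystal. -/
def QnExtraAxioms {B : Type*} (n : ℕ) (wt : B → ℕ → ℕ)
    (E F : ℕ → B → Option B) (Eb Fb : B → Option B) : Prop :=
  (∀ i, 3 ≤ i → i < n → ∀ b,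
      (E i b).bind Eb = (Eb b).bind (E i) ∧ (F i b).bind Eb = (Eb b).bind (F i) ∧
      (E i b).bind Fb = (Fb b).bind (E i) ∧ (F i b).bind Fb = (Fb b).bind (F i)) ∧
  (∀ i, 3 ≤ i → i < n → ∀ b c, (Eb b = some c ∨ Fb b = some c) →
      (∀ m, HasStringLen (E i) b m ↔ HasStringLen (E i) c m) ∧
      (∀ m, HasStringLen (F i) b m ↔ HasStringLen (F i) c m)) ∧
  (∀ b c, Eb b = some c ↔ Fb c = some b) ∧
  (∀ b c, Eb b = some c →
      ∀ k, (wt c k : ℤ) - wt b k = (if k = 1 then 1 else 0) - (if k = 2 then 1 else 0))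

/-- String length as a function (the supremum of the set of iterates that survive). -/
noncomputable def strLen {B : Type*} (g : B → Option B) (b : B) : ℕ :=
  sSup {k | iterOpt g k b ≠ none}

/-- Tensor product of `√gl_n`-crystal data. -/
noncomputable def tensorGl {B C : Type*} (DB : SqGlData B) (DC : SqGlData C) :
    SqGlData (B × C) where
  wt := fun bc k => DB.wt bc.1 k + DC.wt bc.2 k
  e := fun i bc =>
    if strLen (DB.e i) bc.1 ≤ strLen (DC.f i) bc.2 then
      (DC.e i bc.2).map fun c' => (bc.1, c')
    else (DB.e i bc.1).map fun b' => (b', bc.2)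
  f := fun i bc =>
    if strLen (DB.e i) bc.1 < strLen (DC.f i) bc.2 then
      (DC.f i bc.2).map fun c' => (bc.1, c')
    else (DB.f i bc.1).map fun b' => (b', bc.2)

/-- Tensor product of `√q_n`-crystal data. -/
noncomputable def tensorQ {B C : Type*} (DB : SqQData B) (DC : SqQData C) :
    SqQData (B × C) where
  toSqGlData := tensorGl DB.toSqGlData DC.toSqGlData
  ebar := fun bc =>
    if DB.wt bc.1 1 = 0 ∧ DB.wt bc.1 2 = 0 then (DC.ebar bc.2).map fun c' => (bc.1, c')
    else (DB.ebar bc.1).map fun b' => (b', bc.2)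
  fbar := fun bc =>
    if DB.wt bc.1 1 = 0 ∧ DB.wt bc.1 2 = 0 then (DC.fbar bc.2).map fun c' => (bc.1, c')
    else (DB.fbar bc.1).map fun b' => (b', bc.2)
/-! ## Generating functions -/

/-- A set-valued decomposition tableau, normalized to be empty off the shifted diagram. -/
def IsNormalizedSVDT (lam : List ℕ) (T : ℕ × ℕ → Finset ℕ) : Prop :=
  IsSetDecompTab lam T ∧ ∀ i j, ¬ InSD lam i j → T (i, j) = ∅

/-- A decomposition tableau, normalized to be `0` off the shifted diagram. -/
def IsNormalizedDT (lam : List ℕ) (T : ℕ × ℕ → ℕ) : Prop :=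
  IsDecompTab lam T ∧ ∀ i j, ¬ InSD lam i j → T (i, j) = 0

/-- `Σ_λ = ∑_{T ∈ SetDecTab(λ)} x^T` as a formal power series; variable `k` stands for
`x_{k+1}`, i.e. records occurrences of the letter `k+1`. -/
noncomputable def SigmaLam (lam : List ℕ) : MvPowerSeries ℕ ℤ :=
  fun d => (Set.ncard
    {T : ℕ × ℕ → Finset ℕ | IsNormalizedSVDT lam T ∧ ∀ k, wtSet lam T (k + 1) = d k} : ℤ)

/-- The Schur `P`-function `P_λ = ∑_{T ∈ DecTab(λ)} x^T` as a formal power series. -/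
noncomputable def SchurPfun (lam : List ℕ) : MvPowerSeries ℕ ℤ :=
  fun d => (Set.ncard
    {T : ℕ × ℕ → ℕ | IsNormalizedDT lam T ∧ ∀ k, wtNum lam T (k + 1) = d k} : ℤ)

/-! ## Marked (primed) shifted tableaux and `GP`-functions.
We encode the marked alphabet `1' < 1 < 2' < 2 < ⋯` into `ℕ` by `k' ↦ 2k - 1` and
`k ↦ 2k`, so primed letters are odd and the natural order is preserved. -/

/-- A semistandard marked shifted tableau (as a distribution): weakly increasing rows and
columns, no primed (odd) letter repeated in a row, no unprimed (even) letter repeated in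
a column. -/
def IsSemistandardMarked (lam : List ℕ) (d : ℕ × ℕ → ℕ) : Prop :=
  (∀ i j, InSD lam i j → InSD lam i (j + 1) → d (i, j) ≤ d (i, j + 1)) ∧
  (∀ i j, InSD lam i j → InSD lam (i + 1) j → d (i, j) ≤ d (i + 1, j)) ∧
  (∀ i j j', InSD lam i j → InSD lam i j' → j < j' → d (i, j) = d (i, j') →
    Even (d (i, j))) ∧
  (∀ i i' j, InSD lam i j → InSD lam i' j → i < i' → d (i, j) = d (i', j) →
    Odd (d (i, j)))

/-- A semistandard set-valued shifted tableau in the marked alphabet, with no primed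
letters on the main diagonal. -/
def IsSetSSMarkedShifted (lam : List ℕ) (T : ℕ × ℕ → Finset ℕ) : Prop :=
  (∀ i j, InSD lam i j → (T (i, j)).Nonempty ∧ ∀ v ∈ T (i, j), 1 ≤ v) ∧
  (∀ i, InSD lam i i → ∀ v ∈ T (i, i), Even v) ∧
  (∀ d : ℕ × ℕ → ℕ, (∀ i j, InSD lam i j → d (i, j) ∈ T (i, j)) →
    IsSemistandardMarked lam d)

/-- `wtMarked lam T k` is the total number of occurrences of `k` or `k'` in `T`. -/
noncomputable def wtMarked (lam : List ℕ) (T : ℕ × ℕ → Finset ℕ) (k : ℕ) : ℕ :=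
  ((revrowBoxes lam).map fun b =>
    ((T b).filter fun v => v = 2 * k - 1 ∨ v = 2 * k).card).sum

/-- The K-theoretic Schur `P`-function `GP_λ` as a formal power series; variable `k`
stands for `x_{k+1}`. -/
noncomputable def GPfun (lam : List ℕ) : MvPowerSeries ℕ ℤ :=
  fun d => (Set.ncard
    {T : ℕ × ℕ → Finset ℕ | IsSetSSMarkedShifted lam T ∧
      (∀ i j, ¬ InSD lam i j → T (i, j) = ∅) ∧
      ∀ k, wtMarked lam T (k + 1) = d k} : ℤ)

/-! ## Polynomial versions (variables `x_1, …, x_n`, i.e. `X 1, …, X n`) -/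

/-- The boxes of the (unshifted) Young diagram of `lam`, listed row by row. -/
def YDboxes (lam : List ℕ) : List (ℕ × ℕ) :=
  (List.range lam.length).flatMap fun r =>
    (List.range (lam.getD r 0)).map fun j => (r + 1, j + 1)

/-- A semistandard (unshifted) Young tableau: rows weakly increase, columns strictly
increase. -/
def IsSemistandardYT (lam : List ℕ) (d : ℕ × ℕ → ℕ) : Prop :=
  (∀ i j, InYD lam i j → InYD lam i (j + 1) → d (i, j) ≤ d (i, j + 1)) ∧
  (∀ i j, InYD lam i j → InYD lam (i + 1) j → d (i, j) < d (i + 1, j))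

/-- A semistandard set-valued (unshifted) tableau with entries in `{1, …, n}`,
normalized off the diagram. -/
def IsSetSSYT (n : ℕ) (lam : List ℕ) (T : ℕ × ℕ → Finset ℕ) : Prop :=
  (∀ i j, InYD lam i j → (T (i, j)).Nonempty ∧ ∀ v ∈ T (i, j), 1 ≤ v ∧ v ≤ n) ∧
  (∀ i j, ¬ InYD lam i j → T (i, j) = ∅) ∧
  (∀ d : ℕ × ℕ → ℕ, (∀ i j, InYD lam i j → d (i, j) ∈ T (i, j)) → IsSemistandardYT lam d)

/-- The symmetric Grothendieck polynomial `G_λ(x_1, …, x_n)`. -/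
noncomputable def Gpoly (n : ℕ) (lam : List ℕ) : MvPolynomial ℕ ℤ :=
  ∑ᶠ T ∈ {T : ℕ × ℕ → Finset ℕ | IsSetSSYT n lam T},
    ((YDboxes lam).map fun b =>
      ∏ v ∈ T b, (MvPolynomial.X v : MvPolynomial ℕ ℤ)).prod

/-- A semistandard set-valued marked shifted tableau with letters at most `n`,
normalized off the diagram. -/
def IsSetSSMarkedShiftedN (n : ℕ) (lam : List ℕ) (T : ℕ × ℕ → Finset ℕ) : Prop :=
  IsSetSSMarkedShifted lam T ∧ (∀ i j, ¬ InSD lam i j → T (i, j) = ∅) ∧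
  ∀ i j, InSD lam i j → ∀ v ∈ T (i, j), v ≤ 2 * n

/-- The K-theoretic Schur `P`-polynomial `GP_λ(x_1, …, x_n)`. -/
noncomputable def GPpoly (n : ℕ) (lam : List ℕ) : MvPolynomial ℕ ℤ :=
  ∑ᶠ T ∈ {T : ℕ × ℕ → Finset ℕ | IsSetSSMarkedShiftedN n lam T},
    ((revrowBoxes lam).map fun b =>
      ∏ v ∈ T b, (MvPolynomial.X ((v + 1) / 2) : MvPolynomial ℕ ℤ)).prod

/-- The character of the `m`-th tensor power of the standard `√q_n`-crystal, whose
elements are the nonempty subsets of `{1, …, n}` with weight the indicator vector. -/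
noncomputable def standardChar (n m : ℕ) : MvPolynomial ℕ ℤ :=
  ∑ b : Fin m → {S : Finset (Fin n) // S.Nonempty},
    ∏ j : Fin m, ∏ k ∈ (b j).1, (MvPolynomial.X ((k : ℕ) + 1) : MvPolynomial ℕ ℤ)

/-!
The tensor rule is the signature rule for a single pair of strings: with `a = ε'_i(b)`,
`p = φ'_i(b)`, `d = ε'_i(c)`, `q = φ'_i(c)`, walking along the strings shows
`ε'_i(b ⊗ c) = d + (a - q)₊` and `φ'_i(b ⊗ c) = p + (q - a)₊`. These formulas give the
parity and weight axioms at once; for the weight of an `e'_i`-step on the first factor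
(which happens only when `a > q`) one uses that `d + q` is even, so `ε'_i(b ⊗ c)` has the
parity of `a`.
-/

section StringLength

variable {α : Type*} {g : α → Option α} {a a' : α} {k j m m' : ℕ}

lemma iterOpt_succ_eq_none (h : iterOpt g k a = none) : iterOpt g (k + 1) a = none := by
  induction k generalizing a with
  | zero => simp [iterOpt] at h
  | succ k ih =>
    cases hga : g a with
    | none => simp [iterOpt, hga]
    | some a' =>
      simp only [iterOpt, hga, Option.bind_some] at h ⊢
      exact ih h

lemma iterOpt_eq_none_of_le (h : iterOpt g k a = none) (hkj : k ≤ j) :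
    iterOpt g j a = none := by
  induction j, hkj using Nat.le_induction with
  | base => exact h
  | succ j _ ih => exact iterOpt_succ_eq_none ih

lemma HasStringLen.iterOpt_eq_none (h : HasStringLen g a m) (hj : m < j) :
    iterOpt g j a = none :=
  iterOpt_eq_none_of_le h.2 hj

lemma HasStringLen.unique (h : HasStringLen g a m) (h' : HasStringLen g a m') : m = m' := by
  by_contra hne
  rcases Nat.lt_or_gt_of_ne hne with hlt | hlt
  · exact h'.1 (h.iterOpt_eq_none hlt)
  · exact h.1 (h'.iterOpt_eq_none hlt)

lemma HasStringLen.strLen_eq (h : HasStringLen g a m) : strLen g a = m :=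
  IsGreatest.csSup_eq ⟨h.1, fun _ hk => not_lt.1 fun hlt => hk (h.iterOpt_eq_none hlt)⟩

lemma hasStringLen_zero_iff : HasStringLen g a 0 ↔ g a = none := by
  cases h : g a <;> simp [HasStringLen, iterOpt, h]

lemma hasStringLen_succ_iff_of_eq_some (hga : g a = some a') :
    HasStringLen g a (m + 1) ↔ HasStringLen g a' m := by
  simp only [HasStringLen, iterOpt, hga, Option.bind_some]

lemma hasStringLen_succ_iff :
    HasStringLen g a (m + 1) ↔ ∃ a', g a = some a' ∧ HasStringLen g a' m := by
  cases hga : g a with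
  | none => simp [HasStringLen, iterOpt, hga]
  | some a' => simp [hasStringLen_succ_iff_of_eq_some hga]

lemma HasStringLen.exists_eq_succ_of_eq_some (h : HasStringLen g a m) (hga : g a = some a') :
    ∃ m', m = m' + 1 ∧ HasStringLen g a' m' := by
  cases m with
  | zero => simp [hasStringLen_zero_iff.1 h] at hga
  | succ m => exact ⟨m, rfl, (hasStringLen_succ_iff_of_eq_some hga).1 h⟩

end StringLength

section Tensor

variable {B C : Type*} {DB : SqGlData B} {DC : SqGlData C} {n i a p d q : ℕ} {b : B} {c : C}

lemma tensorGl_e_of_le (ha : HasStringLen (DB.e i) b a) (hq : HasStringLen (DC.f i) c q)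
    (h : a ≤ q) : (tensorGl DB DC).e i (b, c) = (DC.e i c).map (b, ·) := by
  simp only [tensorGl, ha.strLen_eq, hq.strLen_eq, if_pos h]

lemma tensorGl_e_of_lt (ha : HasStringLen (DB.e i) b a) (hq : HasStringLen (DC.f i) c q)
    (h : q < a) : (tensorGl DB DC).e i (b, c) = (DB.e i b).map (·, c) := by
  simp only [tensorGl, ha.strLen_eq, hq.strLen_eq, if_neg h.not_ge]

lemma tensorGl_f_of_lt (ha : HasStringLen (DB.e i) b a) (hq : HasStringLen (DC.f i) c q)
    (h : a < q) : (tensorGl DB DC).f i (b, c) = (DC.f i c).map (b, ·) := by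
  simp only [tensorGl, ha.strLen_eq, hq.strLen_eq, if_pos h]

lemma tensorGl_f_of_le (ha : HasStringLen (DB.e i) b a) (hq : HasStringLen (DC.f i) c q)
    (h : q ≤ a) : (tensorGl DB DC).f i (b, c) = (DB.f i b).map (·, c) := by
  simp only [tensorGl, ha.strLen_eq, hq.strLen_eq, if_neg h.not_gt]

lemma hasStringLen_tensorGl_e_of_le (hC : ∀ x y, DC.e i x = some y ↔ DC.f i y = some x)
    (ha : HasStringLen (DB.e i) b a) (hd : HasStringLen (DC.e i) c d)
    (hq : HasStringLen (DC.f i) c q) (h : a ≤ q) :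
    HasStringLen ((tensorGl DB DC).e i) (b, c) d := by
  induction d generalizing c q with
  | zero =>
    rw [hasStringLen_zero_iff, tensorGl_e_of_le ha hq h, hasStringLen_zero_iff.1 hd]
    rfl
  | succ d ih =>
    obtain ⟨c', hc', hd'⟩ := hasStringLen_succ_iff.1 hd
    have hq' := (hasStringLen_succ_iff_of_eq_some ((hC c c').1 hc')).2 hq
    rw [hasStringLen_succ_iff_of_eq_some (by rw [tensorGl_e_of_le ha hq h, hc']; rfl)]
    exact ih hd' hq' (by omega)

lemma hasStringLen_tensorGl_e (hC : ∀ x y, DC.e i x = some y ↔ DC.f i y = some x)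
    (ha : HasStringLen (DB.e i) b a) (hd : HasStringLen (DC.e i) c d)
    (hq : HasStringLen (DC.f i) c q) :
    HasStringLen ((tensorGl DB DC).e i) (b, c) (a - min a q + d) := by
  induction a generalizing b with
  | zero => simpa using hasStringLen_tensorGl_e_of_le hC ha hd hq (Nat.zero_le q)
  | succ a ih =>
    by_cases h : a + 1 ≤ q
    · rw [show a + 1 - min (a + 1) q + d = d by omega]
      exact hasStringLen_tensorGl_e_of_le hC ha hd hq h
    · obtain ⟨b', hb', ha'⟩ := hasStringLen_succ_iff.1 ha
      rw [show a + 1 - min (a + 1) q + d = a - min a q + d + 1 by omega,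
        hasStringLen_succ_iff_of_eq_some (by rw [tensorGl_e_of_lt ha hq (by omega), hb']; rfl)]
      exact ih ha'

lemma hasStringLen_tensorGl_f_of_le (hB : ∀ x y, DB.e i x = some y ↔ DB.f i y = some x)
    (ha : HasStringLen (DB.e i) b a) (hp : HasStringLen (DB.f i) b p)
    (hq : HasStringLen (DC.f i) c q) (h : q ≤ a) :
    HasStringLen ((tensorGl DB DC).f i) (b, c) p := by
  induction p generalizing b a with
  | zero =>
    rw [hasStringLen_zero_iff, tensorGl_f_of_le ha hq h, hasStringLen_zero_iff.1 hp]
    rfl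
  | succ p ih =>
    obtain ⟨b', hb', hp'⟩ := hasStringLen_succ_iff.1 hp
    have ha' := (hasStringLen_succ_iff_of_eq_some ((hB b' b).2 hb')).2 ha
    rw [hasStringLen_succ_iff_of_eq_some (by rw [tensorGl_f_of_le ha hq h, hb']; rfl)]
    exact ih ha' hp' (by omega)

lemma hasStringLen_tensorGl_f (hB : ∀ x y, DB.e i x = some y ↔ DB.f i y = some x)
    (ha : HasStringLen (DB.e i) b a) (hp : HasStringLen (DB.f i) b p)
    (hq : HasStringLen (DC.f i) c q) :
    HasStringLen ((tensorGl DB DC).f i) (b, c) (q - min a q + p) := by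
  induction q generalizing c with
  | zero => simpa using hasStringLen_tensorGl_f_of_le hB ha hp hq (Nat.zero_le a)
  | succ q ih =>
    by_cases h : q + 1 ≤ a
    · rw [show q + 1 - min a (q + 1) + p = p by omega]
      exact hasStringLen_tensorGl_f_of_le hB ha hp hq h
    · obtain ⟨c', hc', hq'⟩ := hasStringLen_succ_iff.1 hq
      rw [show q + 1 - min a (q + 1) + p = q - min a q + p + 1 by omega,
        hasStringLen_succ_iff_of_eq_some (by rw [tensorGl_f_of_lt ha hq (by omega), hc']; rfl)]
      exact ih hq'

lemma tensorGl_f_eq_some_of_e_eq_some (hB : ∀ x y, DB.e i x = some y ↔ DB.f i y = some x)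
    (hC : ∀ x y, DC.e i x = some y ↔ DC.f i y = some x)
    (ha : HasStringLen (DB.e i) b a) (hq : HasStringLen (DC.f i) c q) {y : B × C}
    (h : (tensorGl DB DC).e i (b, c) = some y) : (tensorGl DB DC).f i y = some (b, c) := by
  rcases le_or_gt a q with haq | hqa
  · rw [tensorGl_e_of_le ha hq haq, Option.map_eq_some_iff] at h
    obtain ⟨c', hc', rfl⟩ := h
    have hfc := (hC c c').1 hc'
    have hq' := (hasStringLen_succ_iff_of_eq_some hfc).2 hq
    rw [tensorGl_f_of_lt ha hq' (by omega), hfc]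
    rfl
  · rw [tensorGl_e_of_lt ha hq hqa, Option.map_eq_some_iff] at h
    obtain ⟨b', hb', rfl⟩ := h
    obtain ⟨a', rfl, ha'⟩ := ha.exists_eq_succ_of_eq_some hb'
    rw [tensorGl_f_of_le ha' hq (by omega), (hB b b').1 hb']
    rfl

lemma tensorGl_e_eq_some_of_f_eq_some (hB : ∀ x y, DB.e i x = some y ↔ DB.f i y = some x)
    (hC : ∀ x y, DC.e i x = some y ↔ DC.f i y = some x)
    (ha : HasStringLen (DB.e i) b a) (hq : HasStringLen (DC.f i) c q) {y : B × C}
    (h : (tensorGl DB DC).f i (b, c) = some y) : (tensorGl DB DC).e i y = some (b, c) := by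
  rcases lt_or_ge a q with haq | hqa
  · rw [tensorGl_f_of_lt ha hq haq, Option.map_eq_some_iff] at h
    obtain ⟨c', hc', rfl⟩ := h
    obtain ⟨q', rfl, hq'⟩ := hq.exists_eq_succ_of_eq_some hc'
    rw [tensorGl_e_of_le ha hq' (by omega), (hC c' c).2 hc']
    rfl
  · rw [tensorGl_f_of_le ha hq hqa, Option.map_eq_some_iff] at h
    obtain ⟨b', hb', rfl⟩ := h
    have heb := (hB b' b).2 hb'
    have ha' := (hasStringLen_succ_iff_of_eq_some heb).2 ha
    rw [tensorGl_e_of_lt ha' hq (by omega), heb]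
    rfl

lemma IsSqGlCrystal.exists_hasStringLen_tensorGl (hB : IsSqGlCrystal n DB)
    (hC : IsSqGlCrystal n DC) (hi1 : 1 ≤ i) (hi2 : i < n) (x : B × C) :
    ∃ ep ph : ℕ, HasStringLen ((tensorGl DB DC).e i) x ep ∧
      HasStringLen ((tensorGl DB DC).f i) x ph ∧ Even (ep + ph) ∧
      (ph : ℤ) - ep = 2 * (((tensorGl DB DC).wt x i : ℤ) - (tensorGl DB DC).wt x (i + 1)) := by
  obtain ⟨b, c⟩ := x
  obtain ⟨a, p, ha, hp, ⟨s, hs⟩, hwB⟩ := hB.1 i hi1 hi2 b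
  obtain ⟨d, q, hd, hq, ⟨t, ht⟩, hwC⟩ := hC.1 i hi1 hi2 c
  refine ⟨_, _, hasStringLen_tensorGl_e (hC.2.1 i hi1 hi2) ha hd hq,
    hasStringLen_tensorGl_f (hB.2.1 i hi1 hi2) ha hp hq, ⟨s + t - min a q, by omega⟩, ?_⟩
  simp only [tensorGl]
  push_cast
  omega

lemma IsSqGlCrystal.tensorGl_e_eq_some_iff (hB : IsSqGlCrystal n DB) (hC : IsSqGlCrystal n DC)
    (hi1 : 1 ≤ i) (hi2 : i < n) (x y : B × C) :
    (tensorGl DB DC).e i x = some y ↔ (tensorGl DB DC).f i y = some x := by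
  have hB₂ := hB.2.1 i hi1 hi2
  have hC₂ := hC.2.1 i hi1 hi2
  constructor
  · intro h
    obtain ⟨a, -, ha, -⟩ := hB.1 i hi1 hi2 x.1
    obtain ⟨-, q, -, hq, -⟩ := hC.1 i hi1 hi2 x.2
    exact tensorGl_f_eq_some_of_e_eq_some hB₂ hC₂ ha hq h
  · intro h
    obtain ⟨a, -, ha, -⟩ := hB.1 i hi1 hi2 y.1
    obtain ⟨-, q, -, hq, -⟩ := hC.1 i hi1 hi2 y.2
    exact tensorGl_e_eq_some_of_f_eq_some hB₂ hC₂ ha hq h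

lemma IsSqGlCrystal.tensorGl_wt_sub_of_e_eq_some (hB : IsSqGlCrystal n DB)
    (hC : IsSqGlCrystal n DC) (hi1 : 1 ≤ i) (hi2 : i < n) {x y : B × C}
    (h : (tensorGl DB DC).e i x = some y) {ep : ℕ}
    (hep : HasStringLen ((tensorGl DB DC).e i) x ep) (k : ℕ) :
    ((tensorGl DB DC).wt y k : ℤ) - (tensorGl DB DC).wt x k =
      if Even ep then (if k = i then 1 else 0) else (if k = i + 1 then -1 else 0) := by
  obtain ⟨b, c⟩ := x
  obtain ⟨a, -, ha, -⟩ := hB.1 i hi1 hi2 b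
  obtain ⟨d, q, hd, hq, hdq, -⟩ := hC.1 i hi1 hi2 c
  obtain rfl := hep.unique (hasStringLen_tensorGl_e (hC.2.1 i hi1 hi2) ha hd hq)
  rcases le_or_gt a q with haq | hqa
  · rw [tensorGl_e_of_le ha hq haq, Option.map_eq_some_iff] at h
    obtain ⟨c', hc', rfl⟩ := h
    rw [show a - min a q + d = d by omega, ← hC.2.2 i hi1 hi2 c c' hc' d hd k]
    simp only [tensorGl]
    push_cast
    ring
  · rw [tensorGl_e_of_lt ha hq hqa, Option.map_eq_some_iff] at h
    obtain ⟨b', hb', rfl⟩ := h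
    have hparity : Even (a - min a q + d) ↔ Even a := by
      rw [Nat.even_add] at hdq
      rw [show a - min a q + d = a - q + d by omega, Nat.even_add, Nat.even_sub hqa.le]
      tauto
    simp only [hparity]
    rw [← hB.2.2 i hi1 hi2 b b' hb' a ha k]
    simp only [tensorGl]
    push_cast
    ring

end Tensor

/-- Theorem 3.14 of the paper, `√gl_n` part: the tensor product of
two `√gl_n`-crystals, with `wt(b ⊗ c) = wt(b) + wt(c)` and the operators defined by
the string-length comparison rule, is again a `√gl_n`-crystal. -/
theorem stmt16 {B C : Type*} (n : ℕ) (DB : SqGlData B) (DC : SqGlData C)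
    (hB : IsSqGlCrystal n DB) (hC : IsSqGlCrystal n DC) :
    IsSqGlCrystal n (tensorGl DB DC) :=
  ⟨fun _ hi1 hi2 => hB.exists_hasStringLen_tensorGl hC hi1 hi2,
    fun _ hi1 hi2 => hB.tensorGl_e_eq_some_iff hC hi1 hi2,
    fun _ hi1 hi2 _ _ h _ hep => hB.tensorGl_wt_sub_of_e_eq_some hC hi1 hi2 h hep⟩
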